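/- arXiv:1612.07254 — 5 statements merged into one kernel-verified Lean document; each statement's English description precedes it below -/
import Mathlib

section
/- Let Δ: [0,Λ] → ℝ be three times continuously differentiable with Δ(0) = 2, Δ'(0) = 0, and Δ''(0) < 0. Let K > 0 satisfy K ≥ sup_{λ∈[0,Λ]} |Δ'''(λ)|, set μ = 3|Δ''(0)|/K, and define p(λ) = Kλ³ − 3Δ''(0)λ² − 24. If p(Λ) ≤ 0, then |Δ(λ)| < 2 for all λ ∈ (0, min{μ, Λ}). -/
open Set
open scoped Nat

/-!
Since `Δ(0) = 2` and `Δ'(0) = 0`, Taylor's formula with the third derivative bounded by `K`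
gives `|Δ(λ) - 2 - Δ''(0) λ² / 2| ≤ K λ³ / 6`. The upper estimate
`Δ(λ) - 2 ≤ λ² (3 Δ''(0) + K λ) / 6` is negative exactly when `λ < μ`, and the lower estimate
`Δ(λ) - 2 ≥ -(p(λ) + 24) / 6` exceeds `-4` as soon as `p(λ) < 0`, which holds for `λ < Λ`
because `p` is increasing on `[0, ∞)`.
-/

variable {E : Type*} [NormedAddCommGroup E] [NormedSpace ℝ E] {a b : ℝ}

theorem hasDerivAt_mul_sub_pow_succ_div_factorial (K a x : ℝ) (n : ℕ) :
    HasDerivAt (fun x => K * (x - a) ^ (n + 1) / (n + 1)!) (K * (x - a) ^ n / n !) x := by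
  refine ((((hasDerivAt_pow (n + 1) (x - a)).comp_sub_const x a).const_mul K).div_const
    ((n + 1)! : ℝ)).congr_deriv ?_
  rw [Nat.factorial_succ]
  push_cast
  field_simp

theorem norm_image_le_of_norm_deriv_le_deriv_boundary_Icc {f f' : ℝ → E} {B B' : ℝ → ℝ}
    (hf : ∀ x ∈ Icc a b, HasDerivWithinAt f (f' x) (Icc a b) x)
    (hB : ∀ x ∈ Icc a b, HasDerivWithinAt B (B' x) (Icc a b) x)
    (ha : ‖f a‖ ≤ B a) (bound : ∀ x ∈ Ico a b, ‖f' x‖ ≤ B' x) :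
    ∀ x ∈ Icc a b, ‖f x‖ ≤ B x := fun _ hx =>
  image_norm_le_of_norm_deriv_right_le_deriv_boundary'
    (fun x hx => (hf x hx).continuousWithinAt)
    (fun x hx => (hf x (Ico_subset_Icc_self hx)).mono_of_mem_nhdsWithin
      (Icc_mem_nhdsGE_of_mem hx)) ha
    (fun x hx => (hB x hx).continuousWithinAt)
    (fun x hx => (hB x (Ico_subset_Icc_self hx)).mono_of_mem_nhdsWithin
      (Icc_mem_nhdsGE_of_mem hx)) bound hx

theorem norm_sub_taylor_one_le {f f' f'' : ℝ → E} {K : ℝ}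
    (hf : ∀ x ∈ Icc a b, HasDerivWithinAt f (f' x) (Icc a b) x)
    (hf' : ∀ x ∈ Icc a b, HasDerivWithinAt f' (f'' x) (Icc a b) x)
    (bound : ∀ x ∈ Icc a b, ‖f'' x‖ ≤ K) :
    ∀ x ∈ Icc a b, ‖f x - f a - (x - a) • f' a‖ ≤ K * (x - a) ^ 2 / 2 := by
  refine norm_image_le_of_norm_deriv_le_deriv_boundary_Icc (f' := fun x => f' x - f' a)
    (B' := fun x => K * (x - a)) (fun x hx => ?_) (fun x _ => ?_) (by simp)
    fun x hx => norm_image_sub_le_of_norm_deriv_le_segment' hf'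
      (fun y hy => bound y (Ico_subset_Icc_self hy)) x (Ico_subset_Icc_self hx)
  · simpa using ((hf x hx).sub_const (f a)).fun_sub
      (((hasDerivWithinAt_id x _).sub_const a).smul_const (f' a))
  · simpa [Nat.factorial] using
      (hasDerivAt_mul_sub_pow_succ_div_factorial K a x 1).hasDerivWithinAt (s := Icc a b)

theorem norm_sub_taylor_two_le {f f' f'' f''' : ℝ → E} {K : ℝ}
    (hf : ∀ x ∈ Icc a b, HasDerivWithinAt f (f' x) (Icc a b) x)
    (hf' : ∀ x ∈ Icc a b, HasDerivWithinAt f' (f'' x) (Icc a b) x)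
    (hf'' : ∀ x ∈ Icc a b, HasDerivWithinAt f'' (f''' x) (Icc a b) x)
    (bound : ∀ x ∈ Icc a b, ‖f''' x‖ ≤ K) :
    ∀ x ∈ Icc a b,
      ‖f x - f a - (x - a) • f' a - ((x - a) ^ 2 / 2) • f'' a‖ ≤ K * (x - a) ^ 3 / 6 := by
  refine norm_image_le_of_norm_deriv_le_deriv_boundary_Icc
    (f' := fun x => f' x - f' a - (x - a) • f'' a)
    (B' := fun x => K * (x - a) ^ 2 / 2) (fun x hx => ?_) (fun x _ => ?_) (by simp)
    (fun x hx => norm_sub_taylor_one_le hf' hf'' bound x (Ico_subset_Icc_self hx))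
  · have hquad : HasDerivWithinAt (fun x => (x - a) ^ 2 / 2) (x - a) (Icc a b) x := by
      simpa [Nat.factorial] using
        (hasDerivAt_mul_sub_pow_succ_div_factorial 1 a x 1).hasDerivWithinAt (s := Icc a b)
    simpa using (((hf x hx).sub_const (f a)).fun_sub
      (((hasDerivWithinAt_id x _).sub_const a).smul_const (f' a))).fun_sub
      (hquad.smul_const (f'' a))
  · simpa [Nat.factorial] using
      (hasDerivAt_mul_sub_pow_succ_div_factorial K a x 2).hasDerivWithinAt (s := Icc a b)

theorem abs_lt_two_of_abs_sub_two_sub_quadratic_le {D c K t : ℝ} (ht : 0 < t)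
    (htaylor : |D - 2 - t ^ 2 / 2 * c| ≤ K * t ^ 3 / 6) (hKt : K * t < -3 * c)
    (hcubic : K * t ^ 3 - 3 * c * t ^ 2 - 24 < 0) : |D| < 2 := by
  obtain ⟨hlower, hupper⟩ := abs_le.mp htaylor
  have ht2 : 0 < t ^ 2 := by positivity
  refine abs_lt.mpr ⟨by nlinarith, ?_⟩
  nlinarith [mul_lt_mul_of_pos_right hKt ht2]

theorem stmt1_general (Λ : ℝ)
    (Δ d1 d2 d3 : ℝ → ℝ)
    (hd1 : ∀ x ∈ Icc (0:ℝ) Λ, HasDerivWithinAt Δ (d1 x) (Icc 0 Λ) x)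
    (hd2 : ∀ x ∈ Icc (0:ℝ) Λ, HasDerivWithinAt d1 (d2 x) (Icc 0 Λ) x)
    (hd3 : ∀ x ∈ Icc (0:ℝ) Λ, HasDerivWithinAt d2 (d3 x) (Icc 0 Λ) x)
    (hΔ0 : Δ 0 = 2) (hd10 : d1 0 = 0) (hd20 : d2 0 < 0)
    (K : ℝ) (hK : 0 < K) (hKbound : ∀ x ∈ Icc (0:ℝ) Λ, |d3 x| ≤ K)
    (μ : ℝ) (hμ : μ = 3 * |d2 0| / K)
    (p : ℝ → ℝ) (hp : ∀ lam : ℝ, p lam = K * lam^3 - 3 * d2 0 * lam^2 - 24)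
    (hpΛ : p Λ ≤ 0) :
    ∀ lam ∈ Ioo (0:ℝ) (min μ Λ), |Δ lam| < 2 := by
  rintro lam ⟨hlam0, hlam⟩
  have hlamΛ : lam < Λ := hlam.trans_le (min_le_right _ _)
  have hlamμ : K * lam < -3 * d2 0 := by
    have := hlam.trans_le (min_le_left _ _)
    rw [hμ, abs_of_neg hd20, lt_div_iff₀ hK] at this
    linarith
  have htaylor : |Δ lam - 2 - lam ^ 2 / 2 * d2 0| ≤ K * lam ^ 3 / 6 := by
    simpa [hΔ0, hd10] using
      norm_sub_taylor_two_le hd1 hd2 hd3 hKbound lam ⟨hlam0.le, hlamΛ.le⟩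
  have hp_mono : p lam < p Λ := by
    have hcube := pow_lt_pow_left₀ hlamΛ hlam0.le three_ne_zero
    have hsquare := pow_lt_pow_left₀ hlamΛ hlam0.le two_ne_zero
    rw [hp, hp]
    nlinarith
  exact abs_lt_two_of_abs_sub_two_sub_quadratic_le hlam0 htaylor hlamμ
    (hp lam ▸ hp_mono.trans_le hpΛ)

/-- Quantified ellipticity criterion, case p(Λ) ≤ 0. -/
theorem stmt1 (Λ : ℝ) (hΛ : 0 < Λ)
    (Δ d1 d2 d3 : ℝ → ℝ)
    (hd1 : ∀ x ∈ Icc (0:ℝ) Λ, HasDerivWithinAt Δ (d1 x) (Icc 0 Λ) x)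
    (hd2 : ∀ x ∈ Icc (0:ℝ) Λ, HasDerivWithinAt d1 (d2 x) (Icc 0 Λ) x)
    (hd3 : ∀ x ∈ Icc (0:ℝ) Λ, HasDerivWithinAt d2 (d3 x) (Icc 0 Λ) x)
    (hcont : ContinuousOn d3 (Icc 0 Λ))
    (hΔ0 : Δ 0 = 2) (hd10 : d1 0 = 0) (hd20 : d2 0 < 0)
    (K : ℝ) (hK : 0 < K) (hKbound : ∀ x ∈ Icc (0:ℝ) Λ, |d3 x| ≤ K)
    (μ : ℝ) (hμ : μ = 3 * |d2 0| / K)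
    (p : ℝ → ℝ) (hp : ∀ lam : ℝ, p lam = K * lam^3 - 3 * d2 0 * lam^2 - 24)
    (hpΛ : p Λ ≤ 0) :
    ∀ lam ∈ Ioo (0:ℝ) (min μ Λ), |Δ lam| < 2 :=
  stmt1_general Λ Δ d1 d2 d3 hd1 hd2 hd3 hΔ0 hd10 hd20 K hK hKbound μ hμ p hp hpΛ
end

section
/- Let Δ: [0,Λ] → ℝ be three times continuously differentiable with Δ(0) = 2, Δ'(0) = 0, and Δ''(0) < 0. Let K > 0 satisfy K ≥ sup_{λ∈[0,Λ]} |Δ'''(λ)|, set μ = 3|Δ''(0)|/K, and define p(λ) = Kλ³ − 3Δ''(0)λ² − 24. If p(Λ) > 0, then p has a unique root μ₀ in (0,Λ], and |Δ(λ)| < 2 for all λ ∈ (0, min{μ, μ₀, Λ}). -/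
/-!
Taylor's formula with third-order remainder at `0` gives
`|Δ λ - 2 - Δ''(0) λ² / 2| ≤ K λ³ / 6` on `[0, Λ]`. The upper bound is below `2` exactly when
`K λ < 3 |Δ''(0)|`, i.e. `λ < μ`, and the lower bound equals `-2 - p(λ) / 6`, which is above `-2`
exactly when `p(λ) < 0`, i.e. `λ < μ₀`, since `p` is strictly increasing on `[0, ∞)`.
-/

open Set

theorem abs_sub_le_of_abs_deriv_sub_le {a b : ℝ} {f f' P P' B B' : ℝ → ℝ}
    (hf : ∀ x ∈ Icc a b, HasDerivWithinAt f (f' x) (Icc a b) x)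
    (hP : ∀ x, HasDerivAt P (P' x) x) (hB : ∀ x, HasDerivAt B (B' x) x)
    (ha : |f a - P a| ≤ B a) (bound : ∀ x ∈ Ico a b, |f' x - P' x| ≤ B' x) :
    ∀ x ∈ Icc a b, |f x - P x| ≤ B x := by
  refine image_norm_le_of_norm_deriv_right_le_deriv_boundary (f := f - P)
    (fun x hx => (hf x hx).continuousWithinAt.sub (hP x).continuousAt.continuousWithinAt)
    (fun x hx => ?_) ha hB bound
  exact ((hf x (Ico_subset_Icc_self hx)).mono_of_mem_nhdsWithin
    (Icc_mem_nhdsGE_of_mem hx)).sub (hP x).hasDerivWithinAt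

theorem abs_sub_taylor_two_le {a b K : ℝ} {f f₁ f₂ f₃ : ℝ → ℝ}
    (h₁ : ∀ x ∈ Icc a b, HasDerivWithinAt f (f₁ x) (Icc a b) x)
    (h₂ : ∀ x ∈ Icc a b, HasDerivWithinAt f₁ (f₂ x) (Icc a b) x)
    (h₃ : ∀ x ∈ Icc a b, HasDerivWithinAt f₂ (f₃ x) (Icc a b) x)
    (hK : ∀ x ∈ Icc a b, |f₃ x| ≤ K) :
    ∀ x ∈ Icc a b,
      |f x - (f a + f₁ a * (x - a) + f₂ a * (x - a) ^ 2 / 2)| ≤ K * (x - a) ^ 3 / 6 := by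
  have hlin (c : ℝ) (x : ℝ) : HasDerivAt (fun y => c * (y - a)) c x := by
    simpa using ((hasDerivAt_id x).sub_const a).const_mul c
  have hsq (c : ℝ) (x : ℝ) : HasDerivAt (fun y => c * (y - a) ^ 2 / 2) (c * (x - a)) x := by
    have := (((hasDerivAt_pow 2 (x - a)).comp_sub_const x a).const_mul c).div_const 2
    exact this.congr_deriv (by norm_num; ring)
  have hcube (x : ℝ) : HasDerivAt (fun y => K * (y - a) ^ 3 / 6) (K * (x - a) ^ 2 / 2) x := by
    have := (((hasDerivAt_pow 3 (x - a)).comp_sub_const x a).const_mul K).div_const 6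
    exact this.congr_deriv (by norm_num; ring)
  have hf₂ : ∀ x ∈ Icc a b, |f₂ x - f₂ a| ≤ K * (x - a) :=
    abs_sub_le_of_abs_deriv_sub_le h₃ (fun x => hasDerivAt_const x (f₂ a)) (hlin K)
      (by simp) (fun x hx => by simpa using hK x (Ico_subset_Icc_self hx))
  have hf₁ : ∀ x ∈ Icc a b, |f₁ x - (f₁ a + f₂ a * (x - a))| ≤ K * (x - a) ^ 2 / 2 :=
    abs_sub_le_of_abs_deriv_sub_le h₂ (fun x => (hlin (f₂ a) x).const_add (f₁ a)) (hsq K)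
      (by simp) (fun x hx => hf₂ x (Ico_subset_Icc_self hx))
  exact abs_sub_le_of_abs_deriv_sub_le h₁
    (fun x => ((hlin (f₁ a) x).const_add (f a)).add (hsq (f₂ a) x)) hcube
    (by simp) (fun x hx => by simpa [add_sub_add_left_eq_sub] using hf₁ x (Ico_subset_Icc_self hx))

theorem strictMonoOn_cubic_sub_quadratic {K c e : ℝ} (hK : 0 < K) (hc : c ≤ 0) :
    StrictMonoOn (fun x => K * x ^ 3 - c * x ^ 2 - e) (Ici 0) := by
  intro x hx y _ hxy
  have hcube : K * x ^ 3 < K * y ^ 3 := by gcongr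
  have hsq : -c * x ^ 2 ≤ -c * y ^ 2 := by
    have : 0 ≤ -c := by linarith
    gcongr
  dsimp only
  linarith

theorem StrictMonoOn.exists_zero_unique {f : ℝ → ℝ} {a b : ℝ} (hmono : StrictMonoOn f (Icc a b))
    (hab : a ≤ b) (hf : ContinuousOn f (Icc a b)) (ha : f a < 0) (hb : 0 < f b) :
    ∃ c ∈ Ioo a b, f c = 0 ∧ ∀ x ∈ Icc a b, f x = 0 → x = c := by
  obtain ⟨c, hc, hfc⟩ := intermediate_value_Ioo hab hf ⟨ha, hb⟩
  exact ⟨c, hc, hfc, fun x hx hfx =>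
    hmono.injOn hx (Ioo_subset_Icc_self hc) (hfx.trans hfc.symm)⟩

theorem stmt2_general (Λ : ℝ) (hΛ : 0 < Λ)
    (Δ d1 d2 d3 : ℝ → ℝ)
    (hd1 : ∀ x ∈ Icc (0:ℝ) Λ, HasDerivWithinAt Δ (d1 x) (Icc 0 Λ) x)
    (hd2 : ∀ x ∈ Icc (0:ℝ) Λ, HasDerivWithinAt d1 (d2 x) (Icc 0 Λ) x)
    (hd3 : ∀ x ∈ Icc (0:ℝ) Λ, HasDerivWithinAt d2 (d3 x) (Icc 0 Λ) x)
    (hΔ0 : Δ 0 = 2) (hd10 : d1 0 = 0) (hd20 : d2 0 < 0)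
    (K : ℝ) (hK : 0 < K) (hKbound : ∀ x ∈ Icc (0:ℝ) Λ, |d3 x| ≤ K)
    (μ : ℝ) (hμ : μ = 3 * |d2 0| / K)
    (p : ℝ → ℝ) (hp : ∀ lam : ℝ, p lam = K * lam^3 - 3 * d2 0 * lam^2 - 24)
    (hpΛ : 0 < p Λ) :
    ∃ μ₀ ∈ Ioc (0:ℝ) Λ, p μ₀ = 0 ∧ (∀ x ∈ Ioc (0:ℝ) Λ, p x = 0 → x = μ₀) ∧
      ∀ lam ∈ Ioo (0:ℝ) (min μ (min μ₀ Λ)), |Δ lam| < 2 := by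
  have hp_eq : p = fun x => K * x ^ 3 - 3 * d2 0 * x ^ 2 - 24 := funext hp
  have hmono : StrictMonoOn p (Icc 0 Λ) := hp_eq ▸
    (strictMonoOn_cubic_sub_quadratic hK (by linarith)).mono Icc_subset_Ici_self
  have hcont : ContinuousOn p (Icc 0 Λ) := hp_eq ▸ by fun_prop
  obtain ⟨μ₀, hμ₀, hroot, huniq⟩ :=
    hmono.exists_zero_unique hΛ.le hcont (by norm_num [hp]) hpΛ
  refine ⟨μ₀, Ioo_subset_Ioc_self hμ₀, hroot, fun x hx => huniq x (Ioc_subset_Icc_self hx), ?_⟩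
  rintro lam ⟨hlam0, hlam⟩
  obtain ⟨hlamμ, hlamμ₀, hlamΛ⟩ : lam < μ ∧ lam < μ₀ ∧ lam < Λ := by simpa using hlam
  have hIcc : lam ∈ Icc 0 Λ := ⟨hlam0.le, hlamΛ.le⟩
  have hplam : p lam < 0 := hroot ▸ hmono hIcc (Ioo_subset_Icc_self hμ₀) hlamμ₀
  have hKlam : K * lam < -3 * d2 0 := by
    rw [hμ, abs_of_neg hd20, lt_div_iff₀ hK] at hlamμ
    linarith
  have htaylor := abs_sub_taylor_two_le hd1 hd2 hd3 hKbound lam hIcc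
  simp only [hΔ0, hd10, sub_zero, zero_mul, add_zero] at htaylor
  rw [hp] at hplam
  rw [abs_le] at htaylor
  rw [abs_lt]
  constructor <;> nlinarith [sq_pos_of_pos hlam0]

/-- Quantified ellipticity criterion, case p(Λ) > 0: p has a unique root μ₀ in (0,Λ]
and |Δ| < 2 on (0, min{μ, μ₀, Λ}). -/
theorem stmt2 (Λ : ℝ) (hΛ : 0 < Λ)
    (Δ d1 d2 d3 : ℝ → ℝ)
    (hd1 : ∀ x ∈ Icc (0:ℝ) Λ, HasDerivWithinAt Δ (d1 x) (Icc 0 Λ) x)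
    (hd2 : ∀ x ∈ Icc (0:ℝ) Λ, HasDerivWithinAt d1 (d2 x) (Icc 0 Λ) x)
    (hd3 : ∀ x ∈ Icc (0:ℝ) Λ, HasDerivWithinAt d2 (d3 x) (Icc 0 Λ) x)
    (hcont : ContinuousOn d3 (Icc 0 Λ))
    (hΔ0 : Δ 0 = 2) (hd10 : d1 0 = 0) (hd20 : d2 0 < 0)
    (K : ℝ) (hK : 0 < K) (hKbound : ∀ x ∈ Icc (0:ℝ) Λ, |d3 x| ≤ K)
    (μ : ℝ) (hμ : μ = 3 * |d2 0| / K)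
    (p : ℝ → ℝ) (hp : ∀ lam : ℝ, p lam = K * lam^3 - 3 * d2 0 * lam^2 - 24)
    (hpΛ : 0 < p Λ) :
    ∃ μ₀ ∈ Ioc (0:ℝ) Λ, p μ₀ = 0 ∧ (∀ x ∈ Ioc (0:ℝ) Λ, p x = 0 → x = μ₀) ∧
      ∀ lam ∈ Ioo (0:ℝ) (min μ (min μ₀ Λ)), |Δ lam| < 2 :=
  stmt2_general Λ hΛ Δ d1 d2 d3 hd1 hd2 hd3 hΔ0 hd10 hd20 K hK hKbound μ hμ p hp hpΛ
end

section
/- Let a ∈ C¹([0,T] × [0,Λ]) and for each λ let φ₁(·,λ), φ₂(·,λ) be the canonical solutions of ÿ + a(t,λ)y = 0 (i.e. φ₁(0,λ) = φ̇₂(0,λ) = 1, φ̇₁(0,λ) = φ₂(0,λ) = 0). Define R_λ = sup_{μ∈[0,λ]} max{‖φᵢ(·,μ)‖_∞, ‖φ̇ᵢ(·,μ)‖_∞ : i = 1,2} and let r₀ > R₀. Suppose d(λ,R) is positive, continuous, increasing in both variables with d(λ,R_λ) ≥ sup_{t∈[0,T]} |∂_λ a(t,λ)|, and set Q(λ,R)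 = 2TλR³d(λ,R) − R + r₀. If there exists λ* ∈ (0,Λ] such that for each λ ∈ [0,λ*] the function Q(λ,·) has first two consecutive zeros R_{1,λ} ≤ R_{2,λ} with r₀ ≤ R_{1,λ}, Q(λ,R) > 0 on [0,R_{1,λ}) and Q(λ,R) < 0 on (R_{1,λ}, R_{2,λ}), then R_λ ≤ R_{1,λ} for all λ ∈ (0,λ*]. -/
/-!
For `μ ≤ μ'`, the difference of the canonical solutions at `μ'` and `μ` solves the equation with
coefficient `a(·, μ')` forced by `(a(·, μ) - a(·, μ')) φ(·, μ)`, so by variation of parameters it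
is the Green integral of that forcing. The mean value theorem bounds the coefficient difference by
`d(λ, R_λ) (μ' - μ)`, whence `|φ(t, μ') - φ(t, μ)| ≤ 2 T R_λ³ d(λ, R_λ) (μ' - μ)`, and likewise
for the derivatives. Consequently `R` is Lipschitz on `[0, λ*]` and
`R_λ ≤ R₀ + 2 T λ R_λ³ d(λ, R_λ)`, i.e. `Q(λ, R_λ) > 0`. If `R_λ > R_{1,λ} ≥ r₀ > R₀`, the
intermediate value theorem gives `μ ≤ λ` with `R_μ = R_{1,λ}`, and then
`0 < Q(μ, R_{1,λ}) ≤ Q(λ, R_{1,λ}) = 0` because `Q` increases in `λ`.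
-/

open Set

theorem lipschitzWith_secondOrderField {b c K : ℝ} (hK : 1 ≤ K) (hc : |c| ≤ K) :
    LipschitzWith (Real.toNNReal K) fun x : ℝ × ℝ => (x.2, b - c * x.1) := by
  refine LipschitzWith.of_dist_le' fun x x' => ?_
  simp only [Prod.dist_eq, Real.dist_eq]
  refine max_le ?_ ?_
  · exact (le_max_right _ _).trans
      (le_mul_of_one_le_left (le_max_of_le_left (abs_nonneg _)) hK)
  · rw [show b - c * x.1 - (b - c * x'.1) = c * (x'.1 - x.1) by ring, abs_mul, abs_sub_comm]
    exact mul_le_mul hc (le_max_left _ _) (abs_nonneg _) (zero_le_one.trans hK)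

section LinearODE

variable {T : ℝ} {α f g p p' q q' y y' z z' : ℝ → ℝ}

def SolvesLinearODE (T : ℝ) (α f y y' : ℝ → ℝ) : Prop :=
  ∀ t ∈ Icc 0 T, HasDerivWithinAt y (y' t) (Icc 0 T) t ∧
    HasDerivWithinAt y' (f t - α t * y t) (Icc 0 T) t

theorem solvesLinearODE_of_hasDerivAt
    (h : ∀ t ∈ Icc 0 T, HasDerivAt y (y' t) t ∧ HasDerivAt y' (-α t * y t) t) :
    SolvesLinearODE T α 0 y y' := fun t ht =>
  ⟨(h t ht).1.hasDerivWithinAt,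
    (h t ht).2.hasDerivWithinAt.congr_deriv (by rw [Pi.zero_apply, zero_sub, neg_mul])⟩

namespace SolvesLinearODE

theorem continuousOn (h : SolvesLinearODE T α f y y') : ContinuousOn y (Icc 0 T) :=
  fun t ht => (h t ht).1.continuousWithinAt

theorem continuousOn_deriv (h : SolvesLinearODE T α f y y') : ContinuousOn y' (Icc 0 T) :=
  fun t ht => (h t ht).2.continuousWithinAt

theorem hasDerivWithinAt_Ici (h : SolvesLinearODE T α f y y') {t : ℝ} (ht : t ∈ Ico 0 T) :
    HasDerivWithinAt (fun s => (y s, y' s)) (y' t, f t - α t * y t) (Ici t) t :=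
  ((h t (Ico_subset_Icc_self ht)).1.prodMk (h t (Ico_subset_Icc_self ht)).2)
    |>.mono_of_mem_nhdsWithin (Icc_mem_nhdsGE_of_mem ht)

theorem add (hy : SolvesLinearODE T α f y y') (hz : SolvesLinearODE T α g z z') :
    SolvesLinearODE T α (f + g) (y + z) (y' + z') := fun t ht =>
  ⟨(hy t ht).1.add (hz t ht).1,
    ((hy t ht).2.add (hz t ht).2).congr_deriv (by simp only [Pi.add_apply]; ring)⟩

theorem change_coeff (h : SolvesLinearODE T α f y y') (β : ℝ → ℝ) :
    SolvesLinearODE T β (f + (β - α) * y) y y' := fun t ht =>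
  ⟨(h t ht).1, (h t ht).2.congr_deriv <| by
    simp only [Pi.add_apply, Pi.sub_apply, Pi.mul_apply]; ring⟩

theorem eqOn_of_initial (hα : ContinuousOn α (Icc 0 T)) (hy : SolvesLinearODE T α f y y')
    (hz : SolvesLinearODE T α f z z') (h0 : y 0 = z 0) (h0' : y' 0 = z' 0) :
    ∀ t ∈ Icc 0 T, y t = z t ∧ y' t = z' t := by
  obtain ⟨M, hM⟩ := isCompact_Icc.exists_bound_of_continuousOn hα
  have hlip : ∀ t ∈ Ico 0 T, LipschitzOnWith (Real.toNNReal (max 1 M))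
      (fun x : ℝ × ℝ => (x.2, f t - α t * x.1)) univ := fun t ht =>
    (lipschitzWith_secondOrderField (le_max_left _ _)
      ((hM t (Ico_subset_Icc_self ht)).trans (le_max_right _ _))).lipschitzOnWith
  have hyz := ODE_solution_unique_of_mem_Icc_right hlip
    (hy.continuousOn.prodMk hy.continuousOn_deriv) (fun _ => hy.hasDerivWithinAt_Ici)
    (fun _ _ => mem_univ _) (hz.continuousOn.prodMk hz.continuousOn_deriv)
    (fun _ => hz.hasDerivWithinAt_Ici) (fun _ _ => mem_univ _) (Prod.ext h0 h0')
  exact fun t ht => Prod.ext_iff.mp (hyz ht)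

theorem wronskian_eq (hp : SolvesLinearODE T α 0 p p') (hq : SolvesLinearODE T α 0 q q') :
    ∀ t ∈ Icc 0 T, p t * q' t - q t * p' t = p 0 * q' 0 - q 0 * p' 0 := by
  refine constant_of_has_deriv_right_zero
    ((hp.continuousOn.mul hq.continuousOn_deriv).sub (hq.continuousOn.mul hp.continuousOn_deriv))
    fun t ht => ?_
  have ht' := Ico_subset_Icc_self ht
  have h := ((hp t ht').1.mul (hq t ht').2).sub ((hq t ht').1.mul (hp t ht').2)
  exact (h.congr_deriv (by simp only [Pi.zero_apply]; ring)).mono_of_mem_nhdsWithin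
    (Icc_mem_nhdsGE_of_mem ht)

end SolvesLinearODE

theorem ContinuousOn.hasDerivWithinAt_integral {t : ℝ} (hg : ContinuousOn g (Icc 0 T))
    (ht : t ∈ Icc 0 T) :
    HasDerivWithinAt (fun u => ∫ s in (0)..u, g s) (g t) (Icc 0 T) t :=
  have : Fact (t ∈ Icc 0 T) := ⟨ht⟩
  intervalIntegral.integral_hasDerivWithinAt_right
    ((hg.mono (uIcc_of_le ht.1 ▸ Icc_subset_Icc_right ht.2)).intervalIntegrable)
    (hg.stronglyMeasurableAtFilter_nhdsWithin measurableSet_Icc t) (hg t ht)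

theorem abs_integral_le_mul {C t : ℝ} (hg : ∀ s ∈ Icc 0 T, |g s| ≤ C) (ht : t ∈ Icc 0 T) :
    |∫ s in (0)..t, g s| ≤ C * T := by
  have h := intervalIntegral.norm_integral_le_of_norm_le_const (a := 0) (b := t) (f := g)
    (C := C) fun s hs => by
      rw [uIoc_of_le ht.1] at hs
      exact hg s ⟨hs.1.le, hs.2.trans ht.2⟩
  rw [sub_zero, abs_of_nonneg ht.1] at h
  exact h.trans (mul_le_mul_of_nonneg_left ht.2 ((abs_nonneg _).trans (hg t ht)))

/-- `∫₀ᵗ G(t, s) f(s) ds` for the Green kernel `G(t, s) = p(s) v(t) - u(t) q(s)`. -/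
noncomputable def greenIntegral (p q u v f : ℝ → ℝ) (t : ℝ) : ℝ :=
  v t * (∫ s in (0)..t, p s * f s) - u t * ∫ s in (0)..t, q s * f s

theorem greenIntegral_zero (p q u v f : ℝ → ℝ) : greenIntegral p q u v f 0 = 0 := by
  simp [greenIntegral]

theorem solvesLinearODE_greenIntegral (hp : SolvesLinearODE T α 0 p p')
    (hq : SolvesLinearODE T α 0 q q') (hW : p 0 * q' 0 - q 0 * p' 0 = 1)
    (hf : ContinuousOn f (Icc 0 T)) :
    SolvesLinearODE T α f (greenIntegral p q p q f) (greenIntegral p q p' q' f) := by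
  intro t ht
  have hIp := (hp.continuousOn.mul hf).hasDerivWithinAt_integral ht
  have hIq := (hq.continuousOn.mul hf).hasDerivWithinAt_integral ht
  have hWt := hp.wronskian_eq hq t ht
  constructor
  · exact (((hq t ht).1.mul hIp).sub ((hp t ht).1.mul hIq)).congr_deriv
      (by simp only [greenIntegral, Pi.mul_apply]; ring)
  · refine (((hq t ht).2.mul hIp).sub ((hp t ht).2.mul hIq)).congr_deriv ?_
    simp only [greenIntegral, Pi.zero_apply, Pi.mul_apply]
    linear_combination f t * (hWt.trans hW)

theorem abs_greenIntegral_le {B F t : ℝ} {u v : ℝ → ℝ} (ht : t ∈ Icc 0 T)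
    (hp : ∀ s ∈ Icc 0 T, |p s| ≤ B) (hq : ∀ s ∈ Icc 0 T, |q s| ≤ B)
    (hu : ∀ s ∈ Icc 0 T, |u s| ≤ B) (hv : ∀ s ∈ Icc 0 T, |v s| ≤ B)
    (hf : ∀ s ∈ Icc 0 T, |f s| ≤ F) :
    |greenIntegral p q u v f t| ≤ 2 * T * B ^ 2 * F := by
  have hB : 0 ≤ B := (abs_nonneg _).trans (hp t ht)
  have hI : ∀ r : ℝ → ℝ, (∀ s ∈ Icc 0 T, |r s| ≤ B) →
      |∫ s in (0)..t, r s * f s| ≤ B * F * T := fun r hr =>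
    abs_integral_le_mul (fun s hs => abs_mul (r s) (f s) ▸
      mul_le_mul (hr s hs) (hf s hs) (abs_nonneg _) hB) ht
  calc |greenIntegral p q u v f t|
      ≤ |v t| * |∫ s in (0)..t, p s * f s| + |u t| * |∫ s in (0)..t, q s * f s| := by
        simp only [greenIntegral, ← abs_mul]; exact abs_sub _ _
    _ ≤ B * (B * F * T) + B * (B * F * T) := by
        gcongr
        exacts [hv t ht, hI p hp, hu t ht, hI q hq]
    _ = 2 * T * B ^ 2 * F := by ring

/-- `v - u` is the Green integral of `(α - β) u`. -/
theorem SolvesLinearODE.abs_sub_le_of_abs_coeff_sub_le {β u u' v v' : ℝ → ℝ} {B δ t : ℝ}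
    (hα : ContinuousOn α (Icc 0 T)) (hβ : ContinuousOn β (Icc 0 T))
    (hu : SolvesLinearODE T α 0 u u') (hv : SolvesLinearODE T β 0 v v')
    (hp : SolvesLinearODE T β 0 p p') (hq : SolvesLinearODE T β 0 q q')
    (hW : p 0 * q' 0 - q 0 * p' 0 = 1) (h0 : u 0 = v 0) (h0' : u' 0 = v' 0)
    (hpq : ∀ s ∈ Icc 0 T, |p s| ≤ B ∧ |q s| ≤ B ∧ |p' s| ≤ B ∧ |q' s| ≤ B)
    (huB : ∀ s ∈ Icc 0 T, |u s| ≤ B) (hαβ : ∀ s ∈ Icc 0 T, |α s - β s| ≤ δ)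
    (ht : t ∈ Icc 0 T) :
    |v t - u t| ≤ 2 * T * B ^ 3 * δ ∧ |v' t - u' t| ≤ 2 * T * B ^ 3 * δ := by
  set f := (α - β) * u
  have hf : ContinuousOn f (Icc 0 T) := (hα.sub hβ).mul hu.continuousOn
  have hfB : ∀ s ∈ Icc 0 T, |f s| ≤ B * δ := fun s hs => by
    rw [show f s = (α s - β s) * u s from rfl, abs_mul, mul_comm B]
    exact mul_le_mul (hαβ s hs) (huB s hs) (abs_nonneg _) ((abs_nonneg _).trans (hαβ s hs))
  have hforcing : f + (0 + (β - α) * u) = 0 := by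
    funext s
    simp only [f, Pi.add_apply, Pi.mul_apply, Pi.sub_apply, Pi.zero_apply]
    ring
  have hz := solvesLinearODE_greenIntegral hp hq hW hf
  obtain ⟨hvz, hvz'⟩ := (hforcing ▸ hz.add (hu.change_coeff β)).eqOn_of_initial hβ hv
    (by simp [greenIntegral_zero, h0]) (by simp [greenIntegral_zero, h0']) t ht
  simp only [Pi.add_apply] at hvz hvz'
  rw [← hvz, ← hvz', add_sub_cancel_right, add_sub_cancel_right,
    show 2 * T * B ^ 3 * δ = 2 * T * B ^ 2 * (B * δ) by ring]
  exact ⟨abs_greenIntegral_le ht (fun s hs => (hpq s hs).1) (fun s hs => (hpq s hs).2.1)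
      (fun s hs => (hpq s hs).1) (fun s hs => (hpq s hs).2.1) hfB,
    abs_greenIntegral_le ht (fun s hs => (hpq s hs).1) (fun s hs => (hpq s hs).2.1)
      (fun s hs => (hpq s hs).2.2.1) (fun s hs => (hpq s hs).2.2.2) hfB⟩

end LinearODE

section RunningSup

variable {P : ℝ → ℝ → Prop} {R : ℝ → ℝ} {L : ℝ}

theorem monotoneOn_of_isLUB (hR : ∀ l ∈ Icc 0 L, IsLUB {x | ∃ μ ∈ Icc 0 l, P μ x} (R l)) :
    MonotoneOn R (Icc 0 L) := fun l₁ h₁ l₂ h₂ h₁₂ =>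
  (hR l₁ h₁).2 fun _ ⟨μ, hμ, hx⟩ => (hR l₂ h₂).1 ⟨μ, ⟨hμ.1, hμ.2.trans h₁₂⟩, hx⟩

theorem le_add_of_isLUB {l₁ l₂ C : ℝ}
    (hR : ∀ l ∈ Icc 0 L, IsLUB {x | ∃ μ ∈ Icc 0 l, P μ x} (R l))
    (h₁ : l₁ ∈ Icc 0 L) (h₂ : l₂ ∈ Icc 0 L) (h₁₂ : l₁ ≤ l₂) (hC : 0 ≤ C)
    (h : ∀ μ ∈ Ioc l₁ l₂, ∀ x, P μ x → x ≤ R l₁ + C * (l₂ - l₁)) :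
    R l₂ ≤ R l₁ + C * (l₂ - l₁) := by
  refine (hR l₂ h₂).2 fun x ⟨μ, hμ, hx⟩ => ?_
  rcases le_or_gt μ l₁ with hμl | hμl
  · linarith [(hR l₁ h₁).1 ⟨μ, ⟨hμ.1, hμl⟩, hx⟩, mul_nonneg hC (sub_nonneg.2 h₁₂)]
  · exact h μ ⟨hμl, hμ.2⟩ x hx

end RunningSup

theorem lipschitzOnWith_of_monotoneOn_of_le_add {f : ℝ → ℝ} {s : Set ℝ} {C : ℝ}
    (hf : MonotoneOn f s) (hC : 0 ≤ C)
    (h : ∀ x ∈ s, ∀ y ∈ s, x ≤ y → f y ≤ f x + C * (y - x)) :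
    LipschitzOnWith (Real.toNNReal C) f s := by
  refine LipschitzOnWith.of_le_add_mul' C fun x hx y hy => ?_
  rw [Real.dist_eq]
  rcases le_total x y with hxy | hyx
  · linarith [hf hx hy hxy, mul_nonneg hC (abs_nonneg (x - y))]
  · rw [abs_of_nonneg (sub_nonneg.2 hyx)]
    exact h y hy x hx hyx

theorem le_of_forall_pos_of_eq_zero {R : ℝ → ℝ} {Q : ℝ → ℝ → ℝ} {lam x : ℝ} (hlam : 0 ≤ lam)
    (hR : ContinuousOn R (Icc 0 lam)) (h0 : R 0 ≤ x) (hpos : ∀ μ ∈ Icc 0 lam, 0 < Q μ (R μ))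
    (hmono : ∀ μ ∈ Icc 0 lam, Q μ x ≤ Q lam x) (hx : Q lam x = 0) : R lam ≤ x := by
  by_contra! hlt
  obtain ⟨μ, hμ, rfl⟩ := intermediate_value_Icc hlam hR ⟨h0, hlt.le⟩
  linarith [hpos μ hμ, hmono μ hμ]

section CanonicalFamily

variable {T Λ l μ μ' t : ℝ} {a alam φ₁ φ₂ φ₁' φ₂' d : ℝ → ℝ → ℝ} {R : ℝ → ℝ}

def canonicalValues (T : ℝ) (φ₁ φ₂ φ₁' φ₂' : ℝ → ℝ → ℝ) (μ x : ℝ) : Prop :=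
  ∃ t ∈ Icc 0 T, x = |φ₁ t μ| ∨ x = |φ₂ t μ| ∨ x = |φ₁' t μ| ∨ x = |φ₂' t μ|

theorem abs_le_of_isLUB_canonicalValues
    (hR : ∀ l ∈ Icc 0 Λ, IsLUB {x | ∃ μ ∈ Icc 0 l, canonicalValues T φ₁ φ₂ φ₁' φ₂' μ x} (R l))
    (hl : l ∈ Icc 0 Λ) (hμ : μ ∈ Icc 0 l) (ht : t ∈ Icc 0 T) :
    |φ₁ t μ| ≤ R l ∧ |φ₂ t μ| ≤ R l ∧ |φ₁' t μ| ≤ R l ∧ |φ₂' t μ| ≤ R l :=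
  have hmem : ∀ x, (x = |φ₁ t μ| ∨ x = |φ₂ t μ| ∨ x = |φ₁' t μ| ∨ x = |φ₂' t μ|) → x ≤ R l :=
    fun x hx => (hR l hl).1 ⟨μ, hμ, t, ht, hx⟩
  ⟨hmem _ (by simp), hmem _ (by simp), hmem _ (by simp), hmem _ (by simp)⟩

theorem nonneg_of_isLUB_canonicalValues (hT : 0 ≤ T)
    (hR : ∀ l ∈ Icc 0 Λ, IsLUB {x | ∃ μ ∈ Icc 0 l, canonicalValues T φ₁ φ₂ φ₁' φ₂' μ x} (R l))
    (hl : l ∈ Icc 0 Λ) : 0 ≤ R l :=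
  (abs_nonneg _).trans (abs_le_of_isLUB_canonicalValues hR hl (left_mem_Icc.2 hl.1)
    (left_mem_Icc.2 hT)).1

theorem abs_coeff_sub_le
    (halam : ∀ t ∈ Icc 0 T, ∀ lam ∈ Icc 0 Λ, HasDerivAt (fun e => a t e) (alam t lam) lam)
    (hdmono : ∀ l₁ l₂ x₁ x₂ : ℝ, l₁ ≤ l₂ → x₁ ≤ x₂ → d l₁ x₁ ≤ d l₂ x₂)
    (hdbound : ∀ lam ∈ Icc 0 Λ, ∀ t ∈ Icc 0 T, |alam t lam| ≤ d lam (R lam))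
    (hR : MonotoneOn R (Icc 0 Λ)) (hl : l ∈ Icc 0 Λ) (hμ : 0 ≤ μ) (hμμ' : μ ≤ μ')
    (hμ'l : μ' ≤ l) (ht : t ∈ Icc 0 T) :
    |a t μ - a t μ'| ≤ d l (R l) * (μ' - μ) := by
  have hsub : Icc μ μ' ⊆ Icc 0 Λ := Icc_subset_Icc hμ (hμ'l.trans hl.2)
  rw [abs_sub_comm]
  refine norm_image_sub_le_of_norm_deriv_le_segment'
    (fun e he => (halam t ht e (hsub he)).hasDerivWithinAt) (fun e he => ?_) μ'
    (right_mem_Icc.2 hμμ')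
  have heΛ : e ∈ Icc 0 Λ := hsub (Ico_subset_Icc_self he)
  have hel : e ≤ l := he.2.le.trans hμ'l
  exact (hdbound e heΛ t ht).trans (hdmono _ _ _ _ hel (hR heΛ hl hel))

theorem le_add_of_canonicalValues {x : ℝ}
    (hacont : ContinuousOn (fun p : ℝ × ℝ => a p.1 p.2) (Icc 0 T ×ˢ Icc 0 Λ))
    (halam : ∀ t ∈ Icc 0 T, ∀ lam ∈ Icc 0 Λ, HasDerivAt (fun e => a t e) (alam t lam) lam)
    (hode : ∀ lam ∈ Icc 0 Λ, ∀ t ∈ Icc 0 T,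
      HasDerivAt (fun s => φ₁ s lam) (φ₁' t lam) t ∧
      HasDerivAt (fun s => φ₂ s lam) (φ₂' t lam) t ∧
      HasDerivAt (fun s => φ₁' s lam) (-(a t lam) * φ₁ t lam) t ∧
      HasDerivAt (fun s => φ₂' s lam) (-(a t lam) * φ₂ t lam) t)
    (hinit : ∀ lam ∈ Icc 0 Λ, φ₁ 0 lam = 1 ∧ φ₂' 0 lam = 1 ∧ φ₁' 0 lam = 0 ∧ φ₂ 0 lam = 0)
    (hR : ∀ l ∈ Icc 0 Λ, IsLUB {x | ∃ μ ∈ Icc 0 l, canonicalValues T φ₁ φ₂ φ₁' φ₂' μ x} (R l))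
    (hdmono : ∀ l₁ l₂ x₁ x₂ : ℝ, l₁ ≤ l₂ → x₁ ≤ x₂ → d l₁ x₁ ≤ d l₂ x₂)
    (hdbound : ∀ lam ∈ Icc 0 Λ, ∀ t ∈ Icc 0 T, |alam t lam| ≤ d lam (R lam))
    (hl : l ∈ Icc 0 Λ) (hμ : 0 ≤ μ) (hμμ' : μ ≤ μ') (hμ'l : μ' ≤ l)
    (hx : canonicalValues T φ₁ φ₂ φ₁' φ₂' μ' x) :
    x ≤ R μ + 2 * T * R l ^ 3 * d l (R l) * (μ' - μ) := by
  have hμΛ : μ ∈ Icc 0 Λ := ⟨hμ, (hμμ'.trans hμ'l).trans hl.2⟩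
  have hμ'Λ : μ' ∈ Icc 0 Λ := ⟨hμ.trans hμμ', hμ'l.trans hl.2⟩
  have hcont : ∀ ν ∈ Icc 0 Λ, ContinuousOn (a · ν) (Icc 0 T) := fun ν hν =>
    hacont.comp (continuous_id.prodMk continuous_const).continuousOn fun s hs => ⟨hs, hν⟩
  have hsol : ∀ ν ∈ Icc 0 Λ, SolvesLinearODE T (a · ν) 0 (φ₁ · ν) (φ₁' · ν) ∧
      SolvesLinearODE T (a · ν) 0 (φ₂ · ν) (φ₂' · ν) := fun ν hν =>
    ⟨solvesLinearODE_of_hasDerivAt fun s hs => ⟨(hode ν hν s hs).1, (hode ν hν s hs).2.2.1⟩,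
      solvesLinearODE_of_hasDerivAt fun s hs => ⟨(hode ν hν s hs).2.1, (hode ν hν s hs).2.2.2⟩⟩
  obtain ⟨h₁, h₂', h₁', h₂⟩ := hinit μ hμΛ
  obtain ⟨k₁, k₂', k₁', k₂⟩ := hinit μ' hμ'Λ
  have hW : φ₁ 0 μ' * φ₂' 0 μ' - φ₂ 0 μ' * φ₁' 0 μ' = 1 := by simp [k₁, k₂', k₁', k₂]
  have hBμ' := fun s (hs : s ∈ Icc 0 T) =>
    abs_le_of_isLUB_canonicalValues hR hl ⟨hμ'Λ.1, hμ'l⟩ hs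
  have hBμ := fun s (hs : s ∈ Icc 0 T) =>
    abs_le_of_isLUB_canonicalValues hR hl ⟨hμ, hμμ'.trans hμ'l⟩ hs
  have hδ := fun s (hs : s ∈ Icc 0 T) =>
    abs_coeff_sub_le halam hdmono hdbound (monotoneOn_of_isLUB hR) hl hμ hμμ' hμ'l hs
  obtain ⟨t, ht, hx⟩ := hx
  have e₁ := (hsol μ hμΛ).1.abs_sub_le_of_abs_coeff_sub_le (hcont μ hμΛ) (hcont μ' hμ'Λ)
    (hsol μ' hμ'Λ).1 (hsol μ' hμ'Λ).1 (hsol μ' hμ'Λ).2 hW (h₁.trans k₁.symm)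
    (h₁'.trans k₁'.symm) hBμ' (fun s hs => (hBμ s hs).1) hδ ht
  have e₂ := (hsol μ hμΛ).2.abs_sub_le_of_abs_coeff_sub_le (hcont μ hμΛ) (hcont μ' hμ'Λ)
    (hsol μ' hμ'Λ).2 (hsol μ' hμ'Λ).1 (hsol μ' hμ'Λ).2 hW (h₂.trans k₂.symm)
    (h₂'.trans k₂'.symm) hBμ' (fun s hs => (hBμ s hs).2.1) hδ ht
  have hRμ := abs_le_of_isLUB_canonicalValues hR hμΛ (right_mem_Icc.2 hμ) ht
  rcases hx with rfl | rfl | rfl | rfl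
  · linarith [abs_sub_abs_le_abs_sub (φ₁ t μ') (φ₁ t μ)]
  · linarith [abs_sub_abs_le_abs_sub (φ₂ t μ') (φ₂ t μ)]
  · linarith [abs_sub_abs_le_abs_sub (φ₁' t μ') (φ₁' t μ)]
  · linarith [abs_sub_abs_le_abs_sub (φ₂' t μ') (φ₂' t μ)]

theorem le_add_of_isLUB_canonicalValues {l₁ l₂ : ℝ} (hT : 0 ≤ T)
    (hacont : ContinuousOn (fun p : ℝ × ℝ => a p.1 p.2) (Icc 0 T ×ˢ Icc 0 Λ))
    (halam : ∀ t ∈ Icc 0 T, ∀ lam ∈ Icc 0 Λ, HasDerivAt (fun e => a t e) (alam t lam) lam)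
    (hode : ∀ lam ∈ Icc 0 Λ, ∀ t ∈ Icc 0 T,
      HasDerivAt (fun s => φ₁ s lam) (φ₁' t lam) t ∧
      HasDerivAt (fun s => φ₂ s lam) (φ₂' t lam) t ∧
      HasDerivAt (fun s => φ₁' s lam) (-(a t lam) * φ₁ t lam) t ∧
      HasDerivAt (fun s => φ₂' s lam) (-(a t lam) * φ₂ t lam) t)
    (hinit : ∀ lam ∈ Icc 0 Λ, φ₁ 0 lam = 1 ∧ φ₂' 0 lam = 1 ∧ φ₁' 0 lam = 0 ∧ φ₂ 0 lam = 0)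
    (hR : ∀ l ∈ Icc 0 Λ, IsLUB {x | ∃ μ ∈ Icc 0 l, canonicalValues T φ₁ φ₂ φ₁' φ₂' μ x} (R l))
    (hdpos : ∀ lam x : ℝ, 0 < d lam x)
    (hdmono : ∀ l₁ l₂ x₁ x₂ : ℝ, l₁ ≤ l₂ → x₁ ≤ x₂ → d l₁ x₁ ≤ d l₂ x₂)
    (hdbound : ∀ lam ∈ Icc 0 Λ, ∀ t ∈ Icc 0 T, |alam t lam| ≤ d lam (R lam))
    (hl : l ∈ Icc 0 Λ) (h₁ : 0 ≤ l₁) (h₁₂ : l₁ ≤ l₂) (h₂ : l₂ ≤ l) :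
    R l₂ ≤ R l₁ + 2 * T * R l ^ 3 * d l (R l) * (l₂ - l₁) := by
  have hC : 0 ≤ 2 * T * R l ^ 3 * d l (R l) := by
    have := nonneg_of_isLUB_canonicalValues hT hR hl
    have := hdpos l (R l)
    positivity
  refine le_add_of_isLUB hR ⟨h₁, (h₁₂.trans h₂).trans hl.2⟩ ⟨h₁.trans h₁₂, h₂.trans hl.2⟩ h₁₂ hC
    fun μ hμ x hx => ?_
  have := le_add_of_canonicalValues hacont halam hode hinit hR hdmono hdbound hl h₁ hμ.1.le
    (hμ.2.trans h₂) hx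
  linarith [mul_le_mul_of_nonneg_left (sub_le_sub_right hμ.2 l₁) hC]

end CanonicalFamily

theorem stmt7_general (T Λ : ℝ) (hT : 0 < T)
    (a alam : ℝ → ℝ → ℝ)
    (hacont : ContinuousOn (fun p : ℝ × ℝ => a p.1 p.2) (Icc 0 T ×ˢ Icc 0 Λ))
    (halam : ∀ t ∈ Icc (0:ℝ) T, ∀ lam ∈ Icc (0:ℝ) Λ,
      HasDerivAt (fun e => a t e) (alam t lam) lam)
    (φ₁ φ₂ φ₁' φ₂' : ℝ → ℝ → ℝ)
    (hode : ∀ lam ∈ Icc (0:ℝ) Λ, ∀ t ∈ Icc (0:ℝ) T,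
      HasDerivAt (fun s => φ₁ s lam) (φ₁' t lam) t ∧
      HasDerivAt (fun s => φ₂ s lam) (φ₂' t lam) t ∧
      HasDerivAt (fun s => φ₁' s lam) (-(a t lam) * φ₁ t lam) t ∧
      HasDerivAt (fun s => φ₂' s lam) (-(a t lam) * φ₂ t lam) t)
    (hinit : ∀ lam ∈ Icc (0:ℝ) Λ,
      φ₁ 0 lam = 1 ∧ φ₂' 0 lam = 1 ∧ φ₁' 0 lam = 0 ∧ φ₂ 0 lam = 0)
    (R : ℝ → ℝ)
    (hR : ∀ lam ∈ Icc (0:ℝ) Λ, IsLUB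
      {x : ℝ | ∃ μ ∈ Icc (0:ℝ) lam, ∃ t ∈ Icc (0:ℝ) T,
        x = |φ₁ t μ| ∨ x = |φ₂ t μ| ∨ x = |φ₁' t μ| ∨ x = |φ₂' t μ|} (R lam))
    (r₀ : ℝ) (hr₀ : R 0 < r₀)
    (d : ℝ → ℝ → ℝ)
    (hdpos : ∀ lam x : ℝ, 0 < d lam x)
    (hdmono : ∀ l₁ l₂ x₁ x₂ : ℝ, l₁ ≤ l₂ → x₁ ≤ x₂ → d l₁ x₁ ≤ d l₂ x₂)
    (hdbound : ∀ lam ∈ Icc (0:ℝ) Λ, ∀ t ∈ Icc (0:ℝ) T, |alam t lam| ≤ d lam (R lam))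
    (Q : ℝ → ℝ → ℝ)
    (hQ : ∀ lam x : ℝ, Q lam x = 2*T*lam*x^3*(d lam x) - x + r₀)
    (lamstar : ℝ) (hls : 0 < lamstar) (hls' : lamstar ≤ Λ)
    (R₁ R₂ : ℝ → ℝ)
    (hroots : ∀ lam ∈ Icc (0:ℝ) lamstar,
      Q lam (R₁ lam) = 0 ∧ Q lam (R₂ lam) = 0 ∧ R₁ lam ≤ R₂ lam ∧
      r₀ ≤ R₁ lam ∧
      (∀ x ∈ Ico (0:ℝ) (R₁ lam), 0 < Q lam x) ∧
      (∀ x ∈ Ioo (R₁ lam) (R₂ lam), Q lam x < 0)) :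
    ∀ lam ∈ Ioc (0:ℝ) lamstar, R lam ≤ R₁ lam := by
  have hsub : Icc 0 lamstar ⊆ Icc 0 Λ := Icc_subset_Icc_right hls'
  have hRle : ∀ l ∈ Icc 0 lamstar, ∀ l₁ l₂, 0 ≤ l₁ → l₁ ≤ l₂ → l₂ ≤ l →
      R l₂ ≤ R l₁ + 2 * T * R l ^ 3 * d l (R l) * (l₂ - l₁) := fun l hl _ _ =>
    le_add_of_isLUB_canonicalValues hT.le hacont halam hode hinit hR hdpos hdmono hdbound (hsub hl)
  have hRnonneg : ∀ l ∈ Icc 0 lamstar, 0 ≤ R l := fun l hl =>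
    nonneg_of_isLUB_canonicalValues hT.le hR (hsub hl)
  have hRcont : ContinuousOn R (Icc 0 lamstar) := by
    have := hRnonneg lamstar (right_mem_Icc.2 hls.le)
    have := hdpos lamstar (R lamstar)
    exact (lipschitzOnWith_of_monotoneOn_of_le_add ((monotoneOn_of_isLUB hR).mono hsub)
      (C := 2 * T * R lamstar ^ 3 * d lamstar (R lamstar)) (by positivity)
      fun x hx y hy hxy => hRle lamstar (right_mem_Icc.2 hls.le) x y hx.1 hxy hy.2).continuousOn
  have hQpos : ∀ μ ∈ Icc 0 lamstar, 0 < Q μ (R μ) := fun μ hμ => by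
    have := hRle μ hμ 0 μ le_rfl hμ.1 le_rfl
    rw [hQ]
    linarith
  intro lam hlam
  obtain ⟨hQ₁, -, -, hr₀R₁, -⟩ := hroots lam (Ioc_subset_Icc_self hlam)
  refine le_of_forall_pos_of_eq_zero hlam.1.le (hRcont.mono (Icc_subset_Icc_right hlam.2))
    (hr₀.le.trans hr₀R₁) (fun μ hμ => hQpos μ ⟨hμ.1, hμ.2.trans hlam.2⟩) (fun μ hμ => ?_) hQ₁
  have hx : 0 ≤ 2 * T * R₁ lam ^ 3 := by
    have := hRnonneg 0 (left_mem_Icc.2 hls.le)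
    have : 0 ≤ R₁ lam := by linarith
    positivity
  have hμd := mul_le_mul hμ.2 (hdmono _ _ (R₁ lam) _ hμ.2 le_rfl) (hdpos _ _).le hlam.1.le
  rw [hQ, hQ]
  linarith [mul_le_mul_of_nonneg_left hμd hx]

/-- Quantified a priori bound R_λ ≤ R_{1,λ} for the canonical solutions of the
one-parameter family ÿ + a(t,λ)y = 0. -/
theorem stmt7 (T Λ : ℝ) (hT : 0 < T) (hΛ : 0 < Λ)
    (a alam : ℝ → ℝ → ℝ)
    (hacont : ContinuousOn (fun p : ℝ × ℝ => a p.1 p.2) (Icc 0 T ×ˢ Icc 0 Λ))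
    (halamcont : ContinuousOn (fun p : ℝ × ℝ => alam p.1 p.2) (Icc 0 T ×ˢ Icc 0 Λ))
    (halam : ∀ t ∈ Icc (0:ℝ) T, ∀ lam ∈ Icc (0:ℝ) Λ,
      HasDerivAt (fun e => a t e) (alam t lam) lam)
    (φ₁ φ₂ φ₁' φ₂' : ℝ → ℝ → ℝ)
    (hode : ∀ lam ∈ Icc (0:ℝ) Λ, ∀ t ∈ Icc (0:ℝ) T,
      HasDerivAt (fun s => φ₁ s lam) (φ₁' t lam) t ∧
      HasDerivAt (fun s => φ₂ s lam) (φ₂' t lam) t ∧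
      HasDerivAt (fun s => φ₁' s lam) (-(a t lam) * φ₁ t lam) t ∧
      HasDerivAt (fun s => φ₂' s lam) (-(a t lam) * φ₂ t lam) t)
    (hinit : ∀ lam ∈ Icc (0:ℝ) Λ,
      φ₁ 0 lam = 1 ∧ φ₂' 0 lam = 1 ∧ φ₁' 0 lam = 0 ∧ φ₂ 0 lam = 0)
    (R : ℝ → ℝ)
    (hR : ∀ lam ∈ Icc (0:ℝ) Λ, IsLUB
      {x : ℝ | ∃ μ ∈ Icc (0:ℝ) lam, ∃ t ∈ Icc (0:ℝ) T,
        x = |φ₁ t μ| ∨ x = |φ₂ t μ| ∨ x = |φ₁' t μ| ∨ x = |φ₂' t μ|} (R lam))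
    (r₀ : ℝ) (hr₀ : R 0 < r₀)
    (d : ℝ → ℝ → ℝ)
    (hdpos : ∀ lam x : ℝ, 0 < d lam x)
    (hdcont : Continuous (fun p : ℝ × ℝ => d p.1 p.2))
    (hdmono : ∀ l₁ l₂ x₁ x₂ : ℝ, l₁ ≤ l₂ → x₁ ≤ x₂ → d l₁ x₁ ≤ d l₂ x₂)
    (hdbound : ∀ lam ∈ Icc (0:ℝ) Λ, ∀ t ∈ Icc (0:ℝ) T, |alam t lam| ≤ d lam (R lam))
    (Q : ℝ → ℝ → ℝ)
    (hQ : ∀ lam x : ℝ, Q lam x = 2*T*lam*x^3*(d lam x) - x + r₀)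
    (lamstar : ℝ) (hls : 0 < lamstar) (hls' : lamstar ≤ Λ)
    (R₁ R₂ : ℝ → ℝ)
    (hroots : ∀ lam ∈ Icc (0:ℝ) lamstar,
      Q lam (R₁ lam) = 0 ∧ Q lam (R₂ lam) = 0 ∧ R₁ lam ≤ R₂ lam ∧
      r₀ ≤ R₁ lam ∧
      (∀ x ∈ Ico (0:ℝ) (R₁ lam), 0 < Q lam x) ∧
      (∀ x ∈ Ioo (R₁ lam) (R₂ lam), Q lam x < 0)) :
    ∀ lam ∈ Ioc (0:ℝ) lamstar, R lam ≤ R₁ lam :=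
  stmt7_general T Λ hT a alam hacont halam φ₁ φ₂ φ₁' φ₂' hode hinit R hR r₀ hr₀ d hdpos hdmono
    hdbound Q hQ lamstar hls hls' R₁ R₂ hroots
end

section
/- Let N be an odd positive integer and r(t,e) = (1 − e cos u(t,e))/2 the radius function of the Kepler problem, extended analytically to small negative e. Then r(t,−e) = r(t + Nπ, e) for all t ∈ ℝ and all sufficiently small e ≥ 0. -/
lemma kepler_inj (e : ℝ) (he : |e| < 1) :
    Function.Injective (fun w : ℝ => w - e * Real.sin w) := by
  have hm : StrictMono (fun w : ℝ => w - e * Real.sin w) := by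
    intro a b hab
    have hba : (0:ℝ) < b - a := by linarith
    have hs : |Real.sin b - Real.sin a| ≤ b - a := by
      rw [Real.sin_sub_sin, abs_mul, abs_mul, abs_two]
      have h1 := Real.abs_sin_le_abs (x := (b - a) / 2)
      have h2 := Real.abs_cos_le_one ((b + a) / 2)
      have h3 : |(b - a) / 2| = (b - a) / 2 := abs_of_nonneg (by linarith)
      nlinarith [abs_nonneg (Real.sin ((b - a) / 2)), abs_nonneg (Real.cos ((b + a) / 2))]
    have h4 : e * (Real.sin b - Real.sin a) ≤ |e| * (b - a) := by
      calc e * (Real.sin b - Real.sin a) ≤ |e * (Real.sin b - Real.sin a)| := le_abs_self _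
        _ = |e| * |Real.sin b - Real.sin a| := abs_mul _ _
        _ ≤ |e| * (b - a) := by
            exact mul_le_mul_of_nonneg_left hs (abs_nonneg e)
    have h5 : |e| * (b - a) < 1 * (b - a) := mul_lt_mul_of_pos_right he hba
    simp only
    nlinarith
  exact hm.injective

/-- For odd N the analytically extended radius satisfies r(t,−e) = r(t+Nπ,e)
for small e ≥ 0. -/
theorem stmt13 (N : ℕ) (hN : Odd N) (hN1 : 1 ≤ N)
    (ε : ℝ) (hε : 0 < ε) (hε1 : ε ≤ 1)
    (u : ℝ → ℝ → ℝ)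
    (hu : ∀ t e : ℝ, |e| < ε → u t e - e * Real.sin (u t e) = t)
    (r : ℝ → ℝ → ℝ)
    (hr : ∀ t e : ℝ, |e| < ε → r t e = (1 - e * Real.cos (u t e))/2) :
    ∀ t e : ℝ, 0 ≤ e → e < ε → r t (-e) = r (t + N*Real.pi) e := by
  intro t e he0 heε
  have habs : |e| < ε := by rwa [abs_of_nonneg he0]
  have habsn : |(-e)| < ε := by rwa [abs_neg]
  have he1 : |e| < 1 := lt_of_lt_of_le habs hε1
  obtain ⟨k, hk⟩ := hN
  have hsin : Real.sin (u t (-e) + N * Real.pi) = - Real.sin (u t (-e)) := by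
    rw [hk]
    push_cast
    rw [show u t (-e) + (2 * (k:ℝ) + 1) * Real.pi
          = (u t (-e) + Real.pi) + (k:ℕ) * (2 * Real.pi) by push_cast; ring]
    rw [Real.sin_add_nat_mul_two_pi, Real.sin_add_pi]
  have hcos0 : Real.cos (u t (-e) + N * Real.pi) = - Real.cos (u t (-e)) := by
    rw [hk]
    push_cast
    rw [show u t (-e) + (2 * (k:ℝ) + 1) * Real.pi
          = (u t (-e) + Real.pi) + (k:ℕ) * (2 * Real.pi) by push_cast; ring]
    rw [Real.cos_add_nat_mul_two_pi, Real.cos_add_pi]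
  have key : u (t + N * Real.pi) e = u t (-e) + N * Real.pi := by
    apply kepler_inj e he1
    simp only
    have h1 := hu (t + N * Real.pi) e habs
    have h2 := hu t (-e) habsn
    rw [h1, hsin]
    linarith
  rw [hr t (-e) habsn, hr (t + N * Real.pi) e habs, key, hcos0]
  ring
end

section
/- Let q: ℝ × (−ε,ε) → ℝ be continuous, T-periodic in t, and satisfy q(t,−e) = q(t + T/2, e) for all t and e. Let Δ(e) denote the discriminant (trace of the monodromy matrix over one period T) of the Hill equation ÿ + q(t,e)y = 0. Then Δ(−e) = Δ(e) for all e ∈ (−ε,ε). -/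
/-!
Write `Φₑ(t)` for the fundamental matrix of `ÿ + q(t,e) y = 0` principal at `0`, so that
`Δ(e) = tr Φₑ(T)`. By uniqueness of solutions, a solution shifted by `r` is the combination of the
principal solutions of the shifted equation given by its data at `r`, i.e.
`Φₑ(t + r) = Ψ(t) Φₑ(r)` with `Ψ` principal for `q(· + r, e)`. Periodicity (`r = T`) gives
`Φₑ(T/2 + T) = Φₑ(T/2) Φₑ(T)`, and the symmetry (`r = T/2`) gives
`Φₑ(T + T/2) = Φ₋ₑ(T) Φₑ(T/2)`. Since `det Φₑ(T/2) = 1` (the Wronskian is constant), `Φ₋ₑ(T)`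
is conjugate to `Φₑ(T)`, so the traces agree.
-/

open Set

lemma lipschitzWith_snd_neg_mul_fst (a : ℝ) :
    LipschitzWith (max 1 ‖a‖₊) (fun x : ℝ × ℝ => (x.2, -a * x.1)) := by
  simpa using (LipschitzWith.prod_snd (α := ℝ) (β := ℝ)).prodMk
    ((lipschitzWith_smul (-a)).comp LipschitzWith.prod_fst)

def IsHillSolution (c : ℝ → ℝ) (y y' : ℝ → ℝ) : Prop :=
  ∀ t, HasDerivAt y (y' t) t ∧ HasDerivAt y' (-c t * y t) t

namespace IsHillSolution

variable {c : ℝ → ℝ} {y y' z z' : ℝ → ℝ}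

theorem eq_of_initial (hc : Continuous c) (hy : IsHillSolution c y y')
    (hz : IsHillSolution c z z') (h₀ : y 0 = z 0) (h₀' : y' 0 = z' 0) (t : ℝ) :
    y t = z t ∧ y' t = z' t := by
  set R := |t| + 1
  have hR : 0 < R := by positivity
  have ht : t ∈ Ioo (-R) R := ⟨by linarith [neg_abs_le t], by linarith [le_abs_self t]⟩
  obtain ⟨C, hC⟩ := (isCompact_Icc (a := -R) (b := R)).exists_bound_of_continuousOn hc.continuousOn
  have hv : ∀ s ∈ Ioo (-R) R, LipschitzOnWith (max 1 C.toNNReal)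
      (fun x : ℝ × ℝ => (x.2, -c s * x.1)) univ := fun s hs =>
    have hCs : ‖c s‖₊ ≤ C.toNNReal :=
      norm_toNNReal (a := c s) ▸ Real.toNNReal_le_toNNReal (hC s (Ioo_subset_Icc_self hs))
    ((lipschitzWith_snd_neg_mul_fst (c s)).weaken (max_le_max le_rfl hCs)).lipschitzOnWith
  have hsol : ∀ {u u' : ℝ → ℝ}, IsHillSolution c u u' → ∀ s ∈ Ioo (-R) R,
      HasDerivAt (fun s => (u s, u' s)) (u' s, -c s * u s) s ∧ (u s, u' s) ∈ (univ : Set (ℝ × ℝ)) :=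
    fun hu s _ => ⟨(hu s).1.prodMk (hu s).2, trivial⟩
  have := ODE_solution_unique_of_mem_Ioo (s := fun _ => univ) hv ⟨neg_neg_iff_pos.mpr hR, hR⟩
    (hsol hy) (hsol hz) (Prod.ext h₀ h₀') ht
  exact Prod.ext_iff.mp this

theorem comp_add_const {c' : ℝ → ℝ} (hy : IsHillSolution c y y') (r : ℝ)
    (hc' : ∀ t, c (t + r) = c' t) :
    IsHillSolution c' (fun t => y (t + r)) (fun t => y' (t + r)) := fun t =>
  ⟨(hy (t + r)).1.comp_add_const t r, hc' t ▸ (hy (t + r)).2.comp_add_const t r⟩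

theorem linear_combination (hy : IsHillSolution c y y') (hz : IsHillSolution c z z') (a b : ℝ) :
    IsHillSolution c (fun t => a * y t + b * z t) (fun t => a * y' t + b * z' t) := fun t =>
  ⟨((hy t).1.const_mul a).add ((hz t).1.const_mul b),
    (((hy t).2.const_mul a).add ((hz t).2.const_mul b)).congr_deriv (by ring)⟩

end IsHillSolution

structure IsCanonicalHillBasis (c : ℝ → ℝ) (y₁ y₂ y₁' y₂' : ℝ → ℝ) : Prop where
  solution₁ : IsHillSolution c y₁ y₁'
  solution₂ : IsHillSolution c y₂ y₂'
  init₁ : y₁ 0 = 1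
  init₁' : y₁' 0 = 0
  init₂ : y₂ 0 = 0
  init₂' : y₂' 0 = 1

def hillMatrix (y₁ y₂ y₁' y₂' : ℝ → ℝ) (t : ℝ) : Matrix (Fin 2) (Fin 2) ℝ :=
  !![y₁ t, y₂ t; y₁' t, y₂' t]

namespace IsCanonicalHillBasis

variable {c : ℝ → ℝ} {y₁ y₂ y₁' y₂' : ℝ → ℝ}

theorem det_hillMatrix (hB : IsCanonicalHillBasis c y₁ y₂ y₁' y₂') (t : ℝ) :
    (hillMatrix y₁ y₂ y₁' y₂' t).det = 1 := by
  have hW : ∀ s, HasDerivAt (fun s => y₁ s * y₂' s - y₂ s * y₁' s) 0 s := fun s =>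
    (((hB.solution₁ s).1.mul (hB.solution₂ s).2).sub
      ((hB.solution₂ s).1.mul (hB.solution₁ s).2)).congr_deriv (by ring)
  have := is_const_of_deriv_eq_zero (fun s => (hW s).differentiableAt) (fun s => (hW s).deriv) t 0
  simp only [hillMatrix, Matrix.det_fin_two_of, this, hB.init₁, hB.init₁', hB.init₂, hB.init₂']
  ring

theorem eq_linear_combination (hc : Continuous c) (hB : IsCanonicalHillBasis c y₁ y₂ y₁' y₂')
    {y y' : ℝ → ℝ} (hy : IsHillSolution c y y') (t : ℝ) :
    y t = y 0 * y₁ t + y' 0 * y₂ t ∧ y' t = y 0 * y₁' t + y' 0 * y₂' t :=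
  hy.eq_of_initial hc (hB.solution₁.linear_combination hB.solution₂ (y 0) (y' 0))
    (by simp [hB.init₁, hB.init₂]) (by simp [hB.init₁', hB.init₂']) t

theorem hillMatrix_add (hc : Continuous c) (hB : IsCanonicalHillBasis c y₁ y₂ y₁' y₂')
    {c' z₁ z₂ z₁' z₂' : ℝ → ℝ} (r : ℝ) (hc' : ∀ t, c (t + r) = c' t)
    (hB' : IsCanonicalHillBasis c' z₁ z₂ z₁' z₂') (t : ℝ) :
    hillMatrix y₁ y₂ y₁' y₂' (t + r) = hillMatrix z₁ z₂ z₁' z₂' t * hillMatrix y₁ y₂ y₁' y₂' r := by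
  have hc'' : Continuous c' := (continuous_congr hc').mp (hc.comp (continuous_add_const r))
  obtain ⟨h₁, h₁'⟩ := hB'.eq_linear_combination hc'' (hB.solution₁.comp_add_const r hc') t
  obtain ⟨h₂, h₂'⟩ := hB'.eq_linear_combination hc'' (hB.solution₂.comp_add_const r hc') t
  simp only [zero_add] at h₁ h₁' h₂ h₂'
  ext i j
  fin_cases i <;> fin_cases j <;> simp [hillMatrix, Matrix.mul_apply, Fin.sum_univ_two] <;> linarith

end IsCanonicalHillBasis

theorem Matrix.trace_eq_of_mul_eq_mul {n R : Type*} [Fintype n] [DecidableEq n] [CommRing R]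
    {A M N : Matrix n n R} (hA : IsUnit A.det) (h : A * M = N * A) : N.trace = M.trace := by
  rw [← Matrix.trace_conj' ((Matrix.isUnit_iff_isUnit_det A).mpr hA) N, Matrix.mul_assoc, ← h,
    ← Matrix.mul_assoc, Matrix.nonsing_inv_mul _ hA, Matrix.one_mul]

theorem stmt14_general (T ε : ℝ)
    (q : ℝ → ℝ → ℝ)
    (hqcont : Continuous (fun p : ℝ × ℝ => q p.1 p.2))
    (hqper : ∀ t e : ℝ, q (t + T) e = q t e)
    (hqsym : ∀ t e : ℝ, q t (-e) = q (t + T/2) e)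
    (y₁ y₂ y₁' y₂' : ℝ → ℝ → ℝ)
    (hode : ∀ e ∈ Set.Ioo (-ε) ε, ∀ t : ℝ,
      HasDerivAt (fun s => y₁ s e) (y₁' t e) t ∧
      HasDerivAt (fun s => y₂ s e) (y₂' t e) t ∧
      HasDerivAt (fun s => y₁' s e) (-(q t e) * y₁ t e) t ∧
      HasDerivAt (fun s => y₂' s e) (-(q t e) * y₂ t e) t)
    (hinit : ∀ e ∈ Set.Ioo (-ε) ε,
      y₁ 0 e = 1 ∧ y₂' 0 e = 1 ∧ y₁' 0 e = 0 ∧ y₂ 0 e = 0) :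
    ∀ e ∈ Set.Ioo (-ε) ε, y₁ T (-e) + y₂' T (-e) = y₁ T e + y₂' T e := by
  have basis : ∀ e ∈ Ioo (-ε) ε, IsCanonicalHillBasis (fun t => q t e)
      (fun t => y₁ t e) (fun t => y₂ t e) (fun t => y₁' t e) (fun t => y₂' t e) := fun e he =>
    have ⟨i₁, i₂', i₁', i₂⟩ := hinit e he
    ⟨fun t => ⟨(hode e he t).1, (hode e he t).2.2.1⟩,
      fun t => ⟨(hode e he t).2.1, (hode e he t).2.2.2⟩, i₁, i₁', i₂, i₂'⟩
  intro e he
  have hB := basis e he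
  have hc : Continuous (fun t => q t e) := hqcont.comp (continuous_id.prodMk continuous_const)
  have hB' := basis (-e) ⟨by linarith [he.2], by linarith [he.1]⟩
  have hM := hB.hillMatrix_add hc T (fun t => hqper t e) hB (T / 2)
  have hA := hB.hillMatrix_add hc (T / 2) (fun t => (hqsym t e).symm) hB' T
  rw [add_comm, hA] at hM
  simpa [hillMatrix, Matrix.trace_fin_two_of] using
    Matrix.trace_eq_of_mul_eq_mul (by simp [hB.det_hillMatrix]) hM.symm

/-- Parity of the Hill discriminant: if q(t,−e) = q(t+T/2,e) then Δ(−e) = Δ(e). -/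
theorem stmt14 (T ε : ℝ) (hT : 0 < T) (hε : 0 < ε)
    (q : ℝ → ℝ → ℝ)
    (hqcont : Continuous (fun p : ℝ × ℝ => q p.1 p.2))
    (hqper : ∀ t e : ℝ, q (t + T) e = q t e)
    (hqsym : ∀ t e : ℝ, q t (-e) = q (t + T/2) e)
    (y₁ y₂ y₁' y₂' : ℝ → ℝ → ℝ)
    (hode : ∀ e ∈ Set.Ioo (-ε) ε, ∀ t : ℝ,
      HasDerivAt (fun s => y₁ s e) (y₁' t e) t ∧
      HasDerivAt (fun s => y₂ s e) (y₂' t e) t ∧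
      HasDerivAt (fun s => y₁' s e) (-(q t e) * y₁ t e) t ∧
      HasDerivAt (fun s => y₂' s e) (-(q t e) * y₂ t e) t)
    (hinit : ∀ e ∈ Set.Ioo (-ε) ε,
      y₁ 0 e = 1 ∧ y₂' 0 e = 1 ∧ y₁' 0 e = 0 ∧ y₂ 0 e = 0) :
    ∀ e ∈ Set.Ioo (-ε) ε, y₁ T (-e) + y₂' T (-e) = y₁ T e + y₂' T e :=
  stmt14_general T ε q hqcont hqper hqsym y₁ y₂ y₁' y₂' hode hinit
end
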